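/- Let η be a finite measure on [0,1] with total mass z := η([0,1]) > 0, let ρ := z⁻¹η, let φ : [0,1] → ℝ be bounded measurable, m ≥ 1 an integer, and let ν̂₁ be a measure on (0,∞) with ∫₀^∞ (h ∧ h²) ν̂₁(dh) < ∞. For h > 0 set r_h := h/(z+h). Then the function (a,h) ↦ ⟨φ,(η+h·δ_a)/(z+h)⟩^m − ⟨φ,ρ⟩^m − h·(m/z)·(φ(a)·⟨φ,ρ⟩^{m-1} − ⟨φ,ρ⟩^m) is absolutely integrable with respect to η(da)⊗ν̂₁(dh), and ∫₀¹ η(da) ∫₀^∞ [ ⟨φ,(η+h·δ_a)/(z+h)⟩^m − ⟨φ,ρ⟩^m − h·(m/z)·(φ(a)·⟨φ,ρ⟩^{m-1} − ⟨φ,ρ⟩^m) ] ν̂₁(dh) = z·∫₀^∞ ν̂₁(dh) ∫₀¹ [ ⟨φ,(1−r_h)·ρ + r_h·δ_a⟩^m − ⟨φ,ρ⟩^m ] ρ(da). -/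

import Mathlib

open MeasureTheory Real Set

/-!
Write `v = ⟨φ,ρ⟩`, `u = φ(a)` and `r = h/(z+h)`. Since `η = zρ`, the jump `(η + hδ_a)/(z+h)` is
exactly the resampled measure `(1-r)ρ + rδ_a`, and both integrands involve the same increment
`((1-r)v + ru)^m - v^m`. The subtracted term `h(m/z)v^{m-1}(u - v)` is the first-order term of
that increment with `r` replaced by `h/z`; as `h/z - r = h²/(z(z+h))`, the difference is
`O(min(h, h²))` uniformly in `a`, hence `η ⊗ ν̂₁`-integrable. By Fubini one may integrate in `a`
first, and then the subtracted term disappears because `φ - v` has `η`-integral zero.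
-/

lemma abs_mul_pow_sub_pow_le {C x y : ℝ} (hx : |x| ≤ C) (hy : |y| ≤ C) {i m : ℕ}
    (hi : i < m) :
    |y ^ (m - 1 - i) * (x ^ i - y ^ i)| ≤ m * C ^ (m - 2) * |x - y| := by
  have hC : 0 ≤ C := (abs_nonneg x).trans hx
  rcases i with _ | i
  · simp only [pow_zero, sub_self, mul_zero, abs_zero]; positivity
  have hdiff : |x ^ (i + 1) - y ^ (i + 1)| ≤ |x - y| * (i + 1 : ℕ) * C ^ i :=
    (abs_pow_sub_pow_le ..).trans (by rw [Nat.add_sub_cancel]; gcongr; exact max_le hx hy)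
  calc |y ^ (m - 1 - (i + 1)) * (x ^ (i + 1) - y ^ (i + 1))|
      ≤ C ^ (m - 1 - (i + 1)) * (|x - y| * (i + 1 : ℕ) * C ^ i) := by
        rw [abs_mul, abs_pow]; gcongr
    _ = (i + 1 : ℕ) * C ^ (m - 2) * |x - y| := by
        rw [show m - 2 = (m - 1 - (i + 1)) + i by omega, pow_add]; ring
    _ ≤ m * C ^ (m - 2) * |x - y| := by gcongr

lemma abs_pow_sub_pow_sub_mul_le {C x y : ℝ} (hx : |x| ≤ C) (hy : |y| ≤ C) (m : ℕ) :
    |x ^ m - y ^ m - m * y ^ (m - 1) * (x - y)| ≤ m ^ 2 * C ^ (m - 2) * (x - y) ^ 2 := by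
  have hsum : x ^ m - y ^ m - m * y ^ (m - 1) * (x - y)
      = (∑ i ∈ Finset.range m, y ^ (m - 1 - i) * (x ^ i - y ^ i)) * (x - y) := by
    have hconst : (m : ℝ) * y ^ (m - 1) = ∑ i ∈ Finset.range m, y ^ (m - 1 - i) * y ^ i := by
      rw [← nsmul_eq_mul, ← Finset.card_range m, ← Finset.sum_const, Finset.card_range]
      refine Finset.sum_congr rfl fun i hi => ?_
      rw [← pow_add, Nat.sub_add_cancel (by have := Finset.mem_range.1 hi; omega)]
    rw [← geom_sum₂_mul, hconst, ← sub_mul, ← Finset.sum_sub_distrib]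
    congr 1
    exact Finset.sum_congr rfl fun i _ => by ring
  calc |x ^ m - y ^ m - m * y ^ (m - 1) * (x - y)|
      ≤ (∑ i ∈ Finset.range m, |y ^ (m - 1 - i) * (x ^ i - y ^ i)|) * |x - y| := by
        rw [hsum, abs_mul]; gcongr; exact Finset.abs_sum_le_sum_abs _ _
    _ ≤ (m • (m * C ^ (m - 2) * |x - y|)) * |x - y| := by
        gcongr
        refine (Finset.sum_le_card_nsmul _ _ _ fun i hi => ?_).trans_eq
          (by rw [Finset.card_range])
        exact abs_mul_pow_sub_pow_le hx hy (Finset.mem_range.1 hi)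
    _ = m ^ 2 * C ^ (m - 2) * (x - y) ^ 2 := by rw [nsmul_eq_mul, ← sq_abs (x - y)]; ring

lemma abs_one_sub_mul_add_mul_le {C r u v : ℝ} (hr0 : 0 ≤ r) (hr1 : r ≤ 1) (hu : |u| ≤ C)
    (hv : |v| ≤ C) : |(1 - r) * v + r * u| ≤ C := by
  rw [abs_le] at *; constructor <;> nlinarith

lemma sq_div_mul_add_le_mul_min {z h : ℝ} (hz : 0 < z) (hh : 0 ≤ h) :
    h ^ 2 / (z * (z + h)) ≤ (z⁻¹ + z⁻¹ ^ 2) * min h (h ^ 2) := by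
  have hzh : 0 < z + h := by linarith
  calc h ^ 2 / (z * (z + h)) ≤ min (z⁻¹ * h) (z⁻¹ ^ 2 * h ^ 2) := by
        refine le_min ?_ ?_ <;> rw [div_le_iff₀ (by positivity)] <;> field_simp <;> nlinarith
    _ ≤ min ((z⁻¹ + z⁻¹ ^ 2) * h) ((z⁻¹ + z⁻¹ ^ 2) * h ^ 2) := by
        gcongr <;> linarith [sq_nonneg z⁻¹, inv_pos.2 hz]
    _ = (z⁻¹ + z⁻¹ ^ 2) * min h (h ^ 2) := (mul_min_of_nonneg _ _ (by positivity)).symm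

lemma abs_resample_remainder_le {m : ℕ} (hm : 1 ≤ m) {C z h u v : ℝ} (hz : 0 < z) (hh : 0 ≤ h)
    (hu : |u| ≤ C) (hv : |v| ≤ C) :
    |((1 - h / (z + h)) * v + h / (z + h) * u) ^ m - v ^ m
        - h * (m / z) * (u * v ^ (m - 1) - v ^ m)|
      ≤ (m ^ 2 * C ^ (m - 2) * (2 * C) ^ 2 + m * C ^ (m - 1) * (2 * C)) * (z⁻¹ + z⁻¹ ^ 2)
        * min h (h ^ 2) := by
  have hzh : 0 < z + h := by linarith
  have hC : 0 ≤ C := (abs_nonneg u).trans hu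
  set r := h / (z + h) with hr
  set q := h ^ 2 / (z * (z + h)) with hq
  set x := (1 - r) * v + r * u with hx_def
  have hr0 : 0 ≤ r := by positivity
  have hr1 : r ≤ 1 := by rw [hr, div_le_one hzh]; linarith
  have hx : |x| ≤ C := abs_one_sub_mul_add_mul_le hr0 hr1 hu hv
  have huv : |u - v| ≤ 2 * C := (abs_sub _ _).trans (by linarith)
  have hr2 : r ^ 2 ≤ q := by
    rw [hr, hq, div_pow]; gcongr; nlinarith
  have hsplit : x ^ m - v ^ m - h * (m / z) * (u * v ^ (m - 1) - v ^ m)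
      = (x ^ m - v ^ m - m * v ^ (m - 1) * (x - v)) + m * v ^ (m - 1) * (u - v) * -q := by
    rw [← pow_sub_one_mul (by omega : m ≠ 0) v, hx_def, hr, hq]
    field_simp
    ring
  have hD : |x ^ m - v ^ m - m * v ^ (m - 1) * (x - v)|
      ≤ m ^ 2 * C ^ (m - 2) * (2 * C) ^ 2 * q := by
    refine (abs_pow_sub_pow_sub_mul_le hx hv m).trans ?_
    have : (x - v) ^ 2 ≤ (2 * C) ^ 2 * q := by
      rw [show x - v = r * (u - v) by ring, mul_pow, mul_comm]
      exact mul_le_mul (by rw [← sq_abs]; gcongr) hr2 (sq_nonneg _) (sq_nonneg _)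
    rw [mul_assoc _ _ q]; gcongr
  have hL : |m * v ^ (m - 1) * (u - v) * -q| ≤ m * C ^ (m - 1) * (2 * C) * q := by
    rw [abs_mul, abs_mul, abs_mul, abs_neg, abs_pow, Nat.abs_cast,
      abs_of_nonneg (by positivity : 0 ≤ q)]
    gcongr
  calc _ ≤ |x ^ m - v ^ m - m * v ^ (m - 1) * (x - v)|
        + |m * v ^ (m - 1) * (u - v) * -q| := by
        rw [hsplit]; exact abs_add_le _ _
    _ ≤ (m ^ 2 * C ^ (m - 2) * (2 * C) ^ 2 + m * C ^ (m - 1) * (2 * C)) * q := by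
        rw [add_mul]; exact add_le_add hD hL
    _ ≤ _ := by
        rw [mul_assoc _ (z⁻¹ + z⁻¹ ^ 2)]; gcongr; exact sq_div_mul_add_le_mul_min hz hh

section Measure

variable {α E : Type*} [MeasurableSpace α] [NormedAddCommGroup E] [NormedSpace ℝ E]
  [CompleteSpace E] {μ : Measure α}

lemma integral_add_smul_dirac [MeasurableSingletonClass α] {f : α → E} (hf : Integrable f μ)
    {h : ℝ} (hh : 0 ≤ h) (a : α) :
    ∫ x, f x ∂(μ + ENNReal.ofReal h • Measure.dirac a) = ∫ x, f x ∂μ + h • f a := by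
  rw [integral_add_measure hf
      ((integrable_dirac enorm_lt_top).smul_measure ENNReal.ofReal_ne_top),
    integral_smul_measure, integral_dirac, ENNReal.toReal_ofReal hh]

lemma integral_resample [MeasurableSingletonClass α] {f : α → E} (hf : Integrable f μ)
    {r : ℝ} (hr0 : 0 ≤ r) (hr1 : r ≤ 1) (a : α) :
    ∫ x, f x ∂(ENNReal.ofReal (1 - r) • μ + ENNReal.ofReal r • Measure.dirac a)
      = (1 - r) • ∫ x, f x ∂μ + r • f a := by
  rw [integral_add_smul_dirac (hf.smul_measure ENNReal.ofReal_ne_top) hr0 a,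
    integral_smul_measure, ENNReal.toReal_ofReal (by linarith)]

variable [IsFiniteMeasure μ] {φ : α → ℝ}

lemma abs_average_le [NeZero μ] {C : ℝ} (hφ : ∀ x, |φ x| ≤ C) : |⨍ x, φ x ∂μ| ≤ C :=
  (norm_integral_le_of_norm_le_const (μ := (μ univ)⁻¹ • μ) (f := φ)
    (ae_of_all _ hφ)).trans_eq (by simp)

lemma inv_mul_integral_add_smul_dirac [NeZero μ] [MeasurableSingletonClass α]
    (hφ : Integrable φ μ) {h : ℝ} (hh : 0 ≤ h) (a : α) :
    (μ.real univ + h)⁻¹ * ∫ x, φ x ∂(μ + ENNReal.ofReal h • Measure.dirac a)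
      = (1 - h / (μ.real univ + h)) * ⨍ x, φ x ∂μ + h / (μ.real univ + h) * φ a := by
  have hμ : 0 < μ.real univ := measureReal_univ_pos
  rw [integral_add_smul_dirac hφ hh, ← measure_smul_average μ φ, smul_eq_mul, smul_eq_mul]
  field_simp
  ring

lemma integral_sub_mul_pow_average {ψ : α → ℝ} (hψ : Integrable ψ μ) (hφ : Integrable φ μ)
    (c : ℝ) {m : ℕ} (hm : 1 ≤ m) :
    ∫ a, (ψ a - c * (φ a * (⨍ x, φ x ∂μ) ^ (m - 1) - (⨍ x, φ x ∂μ) ^ m)) ∂μ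
      = ∫ a, ψ a ∂μ := by
  set v := ⨍ x, φ x ∂μ
  have hcentered : ∀ a, c * (φ a * v ^ (m - 1) - v ^ m) = c * v ^ (m - 1) * (φ a - v) :=
    fun a => by
    rw [← pow_sub_one_mul (by omega : m ≠ 0) v]; ring
  have hint : Integrable (fun a => c * v ^ (m - 1) * (φ a - v)) μ :=
    (hφ.sub (integrable_const v)).const_mul _
  simp_rw [hcentered]
  rw [integral_sub hψ hint, integral_const_mul, integral_sub_average, mul_zero, sub_zero]

lemma integral_resample_remainder [NeZero μ] (hφm : Measurable φ) {C : ℝ}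
    (hφb : ∀ x, |φ x| ≤ C) {r : ℝ} (hr0 : 0 ≤ r) (hr1 : r ≤ 1) (c : ℝ) {m : ℕ} (hm : 1 ≤ m) :
    ∫ a, (((1 - r) * ⨍ x, φ x ∂μ + r * φ a) ^ m - (⨍ x, φ x ∂μ) ^ m
        - c * (φ a * (⨍ x, φ x ∂μ) ^ (m - 1) - (⨍ x, φ x ∂μ) ^ m)) ∂μ
      = μ.real univ
        * ⨍ a, (((1 - r) * ⨍ x, φ x ∂μ + r * φ a) ^ m - (⨍ x, φ x ∂μ) ^ m) ∂μ := by
  have hv := abs_average_le (μ := μ) hφb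
  have hψ : Integrable
      (fun a => ((1 - r) * ⨍ x, φ x ∂μ + r * φ a) ^ m - (⨍ x, φ x ∂μ) ^ m) μ :=
    .of_bound (by fun_prop) (C ^ m + C ^ m) (ae_of_all _ fun a => (abs_sub _ _).trans (by
      rw [abs_pow, abs_pow]
      gcongr
      exact abs_one_sub_mul_add_mul_le hr0 hr1 (hφb a) hv))
  have hφ : Integrable φ μ := .of_bound hφm.aestronglyMeasurable C (ae_of_all _ hφb)
  exact (integral_sub_mul_pow_average hψ hφ c hm).trans (measure_smul_average μ _).symm

lemma integrable_resample_remainder {ν : Measure ℝ} [SigmaFinite ν] (hν : ∀ᵐ h ∂ν, 0 < h)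
    (hνint : ∫⁻ h, ENNReal.ofReal (min h (h ^ 2)) ∂ν < ⊤) (hφm : Measurable φ) {C : ℝ}
    (hφb : ∀ x, |φ x| ≤ C) {z v : ℝ} (hz : 0 < z) (hv : |v| ≤ C) {m : ℕ} (hm : 1 ≤ m) :
    Integrable (fun p : α × ℝ => ((1 - p.2 / (z + p.2)) * v + p.2 / (z + p.2) * φ p.1) ^ m
      - v ^ m - p.2 * (m / z) * (φ p.1 * v ^ (m - 1) - v ^ m)) (μ.prod ν) := by
  have hmin : Integrable (fun h => min h (h ^ 2)) ν :=
    (lintegral_ofReal_ne_top_iff_integrable (by fun_prop)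
      (hν.mono fun h hh => le_min hh.le (sq_nonneg h))).1 hνint.ne
  exact ((hmin.comp_snd μ).const_mul _).mono' (by fun_prop) <| by
    filter_upwards [Measure.quasiMeasurePreserving_snd.ae hν] with p hp
    exact abs_resample_remainder_le hm hz hp.le (hφb p.1) hv

end Measure

/-- Lemma 5.3 of the paper for the reproduction part of the generator: the function
`(a,h) ↦ ⟨φ,(η+hδ_a)/(z+h)⟩^m − ⟨φ,ρ⟩^m − h F'(η;a)` is `η ⊗ ν̂₁`-integrable and the
double integral can be rewritten in terms of resampling events `(1−r)ρ + rδ_a`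
with `r = h/(z+h)`. -/
theorem stmt8 (η : Measure unitInterval) [IsFiniteMeasure η] (hη : η Set.univ ≠ 0)
    (φ : unitInterval → ℝ) (hφm : Measurable φ) (C : ℝ) (hφb : ∀ x, |φ x| ≤ C)
    (m : ℕ) (hm : 1 ≤ m)
    (ν₁ : Measure ℝ) [SigmaFinite ν₁] (hν₁car : ν₁ (Ioi (0:ℝ))ᶜ = 0)
    (hν₁int : ∫⁻ h, ENNReal.ofReal (min h (h ^ 2)) ∂ν₁ < ⊤) :
    MeasureTheory.Integrable
      (fun p : unitInterval × ℝ =>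
        (((η Set.univ).toReal + p.2)⁻¹ *
            ∫ x, φ x ∂(η + ENNReal.ofReal p.2 • Measure.dirac p.1)) ^ m
          - (∫ x, φ x ∂((η Set.univ)⁻¹ • η)) ^ m
          - p.2 * (((m : ℝ) / (η Set.univ).toReal) *
              (φ p.1 * (∫ x, φ x ∂((η Set.univ)⁻¹ • η)) ^ (m - 1)
                - (∫ x, φ x ∂((η Set.univ)⁻¹ • η)) ^ m)))
      (η.prod ν₁)
    ∧ ∫ a, (∫ h,
          ((((η Set.univ).toReal + h)⁻¹ *
              ∫ x, φ x ∂(η + ENNReal.ofReal h • Measure.dirac a)) ^ m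
            - (∫ x, φ x ∂((η Set.univ)⁻¹ • η)) ^ m
            - h * (((m : ℝ) / (η Set.univ).toReal) *
                (φ a * (∫ x, φ x ∂((η Set.univ)⁻¹ • η)) ^ (m - 1)
                  - (∫ x, φ x ∂((η Set.univ)⁻¹ • η)) ^ m))) ∂ν₁) ∂η =
      (η Set.univ).toReal *
        ∫ h, (∫ a,
            ((∫ x, φ x ∂(ENNReal.ofReal (1 - h / ((η Set.univ).toReal + h)) •
                  ((η Set.univ)⁻¹ • η)
                + ENNReal.ofReal (h / ((η Set.univ).toReal + h)) •
                  Measure.dirac a)) ^ m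
              - (∫ x, φ x ∂((η Set.univ)⁻¹ • η)) ^ m) ∂((η Set.univ)⁻¹ • η)) ∂ν₁ := by
  rw [← measureReal_def]
  set z := η.real Set.univ
  have : NeZero η := ⟨fun h => hη (by simp [h])⟩
  have hz : 0 < z := measureReal_univ_pos
  have hv : ∫ x, φ x ∂((η Set.univ)⁻¹ • η) = ⨍ x, φ x ∂η := rfl
  simp only [hv]
  set v := ⨍ x, φ x ∂η
  have hφ : Integrable φ η := .of_bound hφm.aestronglyMeasurable C (ae_of_all _ hφb)
  have hpos : ∀ᵐ h ∂ν₁, 0 < h := mem_ae_iff.2 hν₁car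
  have hr : ∀ h, 0 < h → 0 ≤ h / (z + h) ∧ h / (z + h) ≤ 1 := fun h hh =>
    ⟨by positivity, (div_le_one (by positivity)).2 (by linarith)⟩
  have hG := integrable_resample_remainder (μ := η) hpos hν₁int hφm hφb hz
    (abs_average_le (μ := η) hφb) hm
  set G := fun p : unitInterval × ℝ => ((1 - p.2 / (z + p.2)) * v + p.2 / (z + p.2) * φ p.1) ^ m
    - v ^ m - p.2 * (m / z) * (φ p.1 * v ^ (m - 1) - v ^ m)
  refine ⟨hG.congr ?_, ?_⟩
  · filter_upwards [Measure.quasiMeasurePreserving_snd.ae hpos] with p hp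
    rw [inv_mul_integral_add_smul_dirac hφ hp.le]
    ring
  calc _ = ∫ a, ∫ h, G (a, h) ∂ν₁ ∂η :=
        integral_congr_ae (ae_of_all _ fun a => integral_congr_ae (hpos.mono fun h hh => by
          dsimp only [G]; rw [inv_mul_integral_add_smul_dirac hφ hh.le]; ring))
    _ = ∫ h, ∫ a, G (a, h) ∂η ∂ν₁ := integral_integral_swap hG
    _ = _ := by
        rw [← integral_const_mul]
        refine integral_congr_ae (hpos.mono fun h hh => ?_)
        simp only [integral_resample (hφ.smul_measure (ENNReal.inv_ne_top.2 hη)) (hr h hh).1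
          (hr h hh).2, hv, smul_eq_mul]
        exact integral_resample_remainder (μ := η) hφm hφb (hr h hh).1 (hr h hh).2 (h * (m / z)) hm
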